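/- arXiv:2403.17028 — 5 statements merged into one kernel-verified Lean document; each statement's English description precedes it below -/
import Mathlib

section
/- The subgroupoid of the dyadic rationals under the arithmetic mean operation generated by {0, 1} equals the set of dyadic rationals in the closed interval [0,1]. -/
/-!
Both sides are closed under means and contain `0` and `1`, which gives `⊆`. Conversely,
`k / 2 ^ (n + 1)` with `0 ≤ k ≤ 2 ^ (n + 1)` is the mean of `a / 2 ^ n` and `(k - a) / 2 ^ n`
for `a = min k (2 ^ n)`, both numerators lying in `[0, 2 ^ n]`, so induction on `n` gives `⊇`.
-/

def IsDyadic (x : ℝ) : Prop := ∃ k : ℤ, ∃ n : ℕ, x = (k : ℝ) / 2 ^ n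

inductive MeanClosure (X : Set ℝ) : ℝ → Prop
  | base {x : ℝ} : x ∈ X → MeanClosure X x
  | mean {x y : ℝ} : MeanClosure X x → MeanClosure X y → MeanClosure X ((x + y) / 2)

namespace IsDyadic

theorem intCast (k : ℤ) : IsDyadic k := ⟨k, 0, by simp⟩

theorem add {x y : ℝ} (hx : IsDyadic x) (hy : IsDyadic y) : IsDyadic (x + y) := by
  obtain ⟨k, n, rfl⟩ := hx
  obtain ⟨l, m, rfl⟩ := hy
  refine ⟨k * 2 ^ m + l * 2 ^ n, n + m, ?_⟩
  field_simp
  push_cast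
  ring

theorem div_two {x : ℝ} (hx : IsDyadic x) : IsDyadic (x / 2) := by
  obtain ⟨k, n, rfl⟩ := hx
  exact ⟨k, n + 1, by rw [div_div, pow_succ]⟩

end IsDyadic

namespace MeanClosure

variable {X : Set ℝ} {x : ℝ}

theorem isDyadic (hX : ∀ y ∈ X, IsDyadic y) (hx : MeanClosure X x) : IsDyadic x := by
  induction hx with
  | base hy => exact hX _ hy
  | mean _ _ hy hz => exact (hy.add hz).div_two

theorem mem_Icc {a b : ℝ} (hX : X ⊆ Set.Icc a b) (hx : MeanClosure X x) : x ∈ Set.Icc a b := by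
  induction hx with
  | base hy => exact hX hy
  | mean _ _ hy hz => constructor <;> linarith [hy.1, hy.2, hz.1, hz.2]

end MeanClosure

theorem meanClosure_zero_one_intCast_div_two_pow (n : ℕ) :
    ∀ k : ℤ, 0 ≤ k → k ≤ 2 ^ n → MeanClosure {0, 1} ((k : ℝ) / 2 ^ n) := by
  induction n with
  | zero =>
    intro k hk0 hk1
    obtain rfl | rfl : k = 0 ∨ k = 1 := by omega
    all_goals exact MeanClosure.base (by norm_num)
  | succ n ih =>
    intro k hk0 hk1
    set a : ℤ := min k (2 ^ n)
    have ha : 0 ≤ a ∧ a ≤ 2 ^ n := ⟨le_min hk0 (by positivity), min_le_right _ _⟩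
    have hb : 0 ≤ k - a ∧ k - a ≤ 2 ^ n := by
      have : (2 : ℤ) ^ (n + 1) = 2 ^ n + 2 ^ n := by ring
      omega
    have hmean : (k : ℝ) / 2 ^ (n + 1) = ((a : ℝ) / 2 ^ n + ((k - a : ℤ) : ℝ) / 2 ^ n) / 2 := by
      push_cast
      rw [pow_succ]
      ring
    rw [hmean]
    exact .mean (ih a ha.1 ha.2) (ih (k - a) hb.1 hb.2)

theorem intCast_div_two_pow_mem_Icc_iff (k : ℤ) (n : ℕ) :
    (k : ℝ) / 2 ^ n ∈ Set.Icc 0 1 ↔ 0 ≤ k ∧ k ≤ 2 ^ n := by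
  have h2n : (0 : ℝ) < 2 ^ n := by positivity
  rw [Set.mem_Icc, le_div_iff₀ h2n, zero_mul, div_le_one h2n]
  exact_mod_cast Iff.rfl

theorem subgroupoid_zero_one :
    {x : ℝ | MeanClosure {0, 1} x} = {x : ℝ | IsDyadic x ∧ 0 ≤ x ∧ x ≤ 1} := by
  ext x
  constructor
  · intro hx
    have hdyadic : ∀ y ∈ ({0, 1} : Set ℝ), IsDyadic y := by
      rintro y (rfl | rfl)
      exacts [by exact_mod_cast IsDyadic.intCast 0, by exact_mod_cast IsDyadic.intCast 1]
    have hIcc : ({0, 1} : Set ℝ) ⊆ Set.Icc 0 1 := by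
      rintro y (rfl | rfl) <;> norm_num
    exact ⟨hx.isDyadic hdyadic, hx.mem_Icc hIcc⟩
  · rintro ⟨⟨k, n, rfl⟩, hx⟩
    obtain ⟨hk0, hk1⟩ := (intCast_div_two_pow_mem_Icc_iff k n).1 hx
    exact meanClosure_zero_one_intCast_div_two_pow n k hk0 hk1
end

section
/- The subgroupoid of the dyadic rationals under the arithmetic mean operation generated by {0, 3} equals the set of dyadic rationals in [0,3] of the form 3d for a dyadic rational d ∈ [0,1]; in particular 1 does not belong to this subgroupoid. -/
/-! The mean operation is affine, so `t ↦ a + t (b - a)` carries the mean-closure of `{0, 1}` onto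
that of `{a, b}`. The mean-closure of `{0, 1}` consists of the dyadic rationals of `[0, 1]`: they are
closed under means, and `k / 2^(n+1)` is the mean of `⌊k/2⌋ / 2^n` and `⌈k/2⌉ / 2^n`. Since `1/3` is
not dyadic (`3 ∤ 2^n`), `1` is not generated by `{0, 3}`. -/

lemma IsDyadic.mean {d e : ℝ} (hd : IsDyadic d) (he : IsDyadic e) : IsDyadic ((d + e) / 2) := by
  obtain ⟨k, n, rfl⟩ := hd
  obtain ⟨l, m, rfl⟩ := he
  refine ⟨k * 2 ^ m + l * 2 ^ n, n + m + 1, ?_⟩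
  push_cast
  field_simp
  ring

lemma IsDyadic.exists_of_mem_Icc {d : ℝ} (hd : IsDyadic d) (h₀ : 0 ≤ d) (h₁ : d ≤ 1) :
    ∃ k : ℤ, ∃ n : ℕ, 0 ≤ k ∧ k ≤ 2 ^ n ∧ d = k / 2 ^ n := by
  obtain ⟨k, n, rfl⟩ := hd
  have h2n : (0 : ℝ) < 2 ^ n := by positivity
  refine ⟨k, n, ?_, ?_, rfl⟩
  · have : (0 : ℝ) ≤ k := by simpa using (le_div_iff₀ h2n).mp h₀
    exact_mod_cast this
  · exact_mod_cast (div_le_one h2n).mp h₁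

lemma not_isDyadic_one_div_three : ¬ IsDyadic (1 / 3) := by
  rintro ⟨k, n, h⟩
  have h3k : (3 * k : ℤ) = 2 ^ n := by
    field_simp at h
    exact_mod_cast h.symm
  have h32 : (3 : ℤ) ∣ 2 := Int.Prime.dvd_pow' (by norm_num) ⟨k, h3k.symm⟩
  omega

lemma meanClosure_pair_add_div_pow (a b : ℝ) (n : ℕ) :
    ∀ k : ℤ, 0 ≤ k → k ≤ 2 ^ n → MeanClosure {a, b} (a + k / 2 ^ n * (b - a)) := by
  induction n with
  | zero =>
    intro k hk₀ hk₁
    obtain rfl | rfl : k = 0 ∨ k = 1 := by omega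
    · simpa using MeanClosure.base (X := {a, b}) (Set.mem_insert a {b})
    · simpa using MeanClosure.base (X := {a, b}) (Set.mem_insert_of_mem a rfl)
  | succ n ih =>
    intro k hk₀ hk₁
    have hpow : (2 : ℤ) ^ (n + 1) = 2 * 2 ^ n := by ring
    convert MeanClosure.mean (ih (k / 2) (by omega) (by omega))
      (ih (k - k / 2) (by omega) (by omega)) using 1
    push_cast
    field_simp
    ring

theorem meanClosure_pair_iff (a b x : ℝ) :
    MeanClosure {a, b} x ↔ ∃ d : ℝ, IsDyadic d ∧ 0 ≤ d ∧ d ≤ 1 ∧ x = a + d * (b - a) := by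
  constructor
  · intro h
    induction h with
    | base hx =>
      rcases hx with rfl | rfl
      · exact ⟨0, ⟨0, 0, by simp⟩, le_rfl, zero_le_one, by simp⟩
      · exact ⟨1, ⟨1, 0, by simp⟩, zero_le_one, le_rfl, by ring⟩
    | mean _ _ ihx ihy =>
      obtain ⟨d, hd, hd₀, hd₁, rfl⟩ := ihx
      obtain ⟨e, he, he₀, he₁, rfl⟩ := ihy
      exact ⟨(d + e) / 2, hd.mean he, by linarith, by linarith, by ring⟩
  · rintro ⟨d, hd, hd₀, hd₁, rfl⟩
    obtain ⟨k, n, hk₀, hk₁, rfl⟩ := hd.exists_of_mem_Icc hd₀ hd₁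
    exact meanClosure_pair_add_div_pow a b n k hk₀ hk₁

theorem subgroupoid_zero_three :
    ({x : ℝ | MeanClosure {0, 3} x}
      = {x : ℝ | ∃ d : ℝ, IsDyadic d ∧ 0 ≤ d ∧ d ≤ 1 ∧ x = 3 * d}) ∧
    ¬ MeanClosure {0, 3} 1 := by
  have hset : {x : ℝ | MeanClosure {0, 3} x}
      = {x : ℝ | ∃ d : ℝ, IsDyadic d ∧ 0 ≤ d ∧ d ≤ 1 ∧ x = 3 * d} := by
    ext x
    simp only [Set.mem_ofPred_eq, meanClosure_pair_iff, zero_add, sub_zero, mul_comm]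
  refine ⟨hset, fun h ↦ ?_⟩
  obtain ⟨d, hd, -, -, h3d⟩ : 1 ∈ {x : ℝ | ∃ d : ℝ, IsDyadic d ∧ 0 ≤ d ∧ d ≤ 1 ∧ x = 3 * d} :=
    hset ▸ h
  obtain rfl : d = 1 / 3 := by linarith
  exact not_isDyadic_one_div_three hd
end

section
/- For every odd positive integer k > 1, the dyadic interval D_k = [0,k] ∩ D (under the arithmetic mean operation) is not generated by its two endpoints 0 and k. -/
/-! Everything generated from `0` and `a` has the form `m a / 2ⁿ` with `m : ℤ`. So the dyadic `1`,
which lies in `[0, k]`, would give `k ∣ 2ⁿ`, impossible for odd `k > 1`. -/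

theorem MeanClosure.exists_eq_mul_div_two_pow {a x : ℝ} (hx : MeanClosure {0, a} x) :
    ∃ m : ℤ, ∃ n : ℕ, x = m * a / 2 ^ n := by
  induction hx with
  | base hx =>
    rcases hx with rfl | rfl
    · exact ⟨0, 0, by simp⟩
    · exact ⟨1, 0, by simp⟩
  | mean _ _ ihx ihy =>
    obtain ⟨m₁, n₁, rfl⟩ := ihx
    obtain ⟨m₂, n₂, rfl⟩ := ihy
    refine ⟨m₁ * 2 ^ n₂ + m₂ * 2 ^ n₁, n₁ + n₂ + 1, ?_⟩
    push_cast
    field_simp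
    ring

theorem Nat.eq_one_of_odd_of_dvd_two_pow {k n : ℕ} (hodd : Odd k) (hdvd : k ∣ 2 ^ n) : k = 1 :=
  (hodd.coprime_two_right.pow_right n).eq_one_of_dvd hdvd

theorem not_meanClosure_one {k : ℕ} (hodd : Odd k) (hk : k ≠ 1) :
    ¬ MeanClosure {0, (k : ℝ)} 1 := by
  intro h
  obtain ⟨m, n, hmn⟩ := h.exists_eq_mul_div_two_pow
  have hpow : ((2 ^ n : ℕ) : ℤ) = k * m := by
    have : (2 : ℝ) ^ n = k * m := by
      rw [eq_div_iff (by positivity)] at hmn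
      linarith
    exact_mod_cast this
  have hdvd : k ∣ 2 ^ n := Int.natCast_dvd_natCast.mp ⟨m, hpow⟩
  exact hk (Nat.eq_one_of_odd_of_dvd_two_pow hodd hdvd)

theorem interval_not_generated_by_endpoints (k : ℕ) (hodd : Odd k) (hk : 1 < k) :
    {x : ℝ | MeanClosure {0, (k : ℝ)} x} ≠ {x : ℝ | IsDyadic x ∧ 0 ≤ x ∧ x ≤ (k : ℝ)} := by
  intro h
  have hone : (1 : ℝ) ∈ {x : ℝ | IsDyadic x ∧ 0 ≤ x ∧ x ≤ (k : ℝ)} :=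
    ⟨⟨1, 0, by norm_num⟩, zero_le_one, by exact_mod_cast hk.le⟩
  rw [← h] at hone
  exact not_meanClosure_one hodd hk.ne' hone
end

section
/- Let P be a dyadic n-dimensional polytope, i.e., P = C ∩ D^n where C is a real polytope in ℝ^n with vertices in D^n. If W is a wall (face) of the real polytope C, then W ∩ P is a wall of the groupoid (P, ∘), where x ∘ y = (x+y)/2 coordinatewise. -/
/-- A wall of a real convex set `C`: for all `a, b ∈ C` and `r ∈ (0,1)`,
`(1-r)a + rb ∈ W` iff `a ∈ W` and `b ∈ W`. -/
def IsRealWall {n : ℕ} (C W : Set (Fin n → ℝ)) : Prop :=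
  W ⊆ C ∧ ∀ a ∈ C, ∀ b ∈ C, ∀ r : ℝ, 0 < r → r < 1 →
    ((1 - r) • a + r • b ∈ W ↔ a ∈ W ∧ b ∈ W)

def IsDyadicWall {n : ℕ} (P A : Set (Fin n → ℝ)) : Prop :=
  A ⊆ P ∧ ∀ a ∈ P, ∀ b ∈ P, ((fun i => (a i + b i) / 2) ∈ A ↔ a ∈ A ∧ b ∈ A)

theorem IsDyadic.add_div_two {x y : ℝ} (hx : IsDyadic x) (hy : IsDyadic y) :
    IsDyadic ((x + y) / 2) := by
  obtain ⟨k, m, rfl⟩ := hx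
  obtain ⟨l, p, rfl⟩ := hy
  refine ⟨k * 2 ^ p + l * 2 ^ m, m + p + 1, ?_⟩
  rw [div_add_div _ _ (by positivity) (by positivity), div_div,
    div_eq_div_iff (by positivity) (by positivity)]
  push_cast
  ring

theorem coordMidpoint_eq_smul_add_smul {n : ℕ} (a b : Fin n → ℝ) :
    (fun i => (a i + b i) / 2) = (1 - (1 / 2 : ℝ)) • a + (1 / 2 : ℝ) • b := by
  funext i
  simp only [Pi.add_apply, Pi.smul_apply, smul_eq_mul]
  ring

theorem IsRealWall.coordMidpoint_mem_iff {n : ℕ} {C W : Set (Fin n → ℝ)}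
    (hW : IsRealWall C W) {a b : Fin n → ℝ} (ha : a ∈ C) (hb : b ∈ C) :
    (fun i => (a i + b i) / 2) ∈ W ↔ a ∈ W ∧ b ∈ W := by
  rw [coordMidpoint_eq_smul_add_smul]
  exact hW.2 a ha b hb _ (by norm_num) (by norm_num)

theorem IsRealWall.isDyadicWall_inter {n : ℕ} {C W S : Set (Fin n → ℝ)}
    (hW : IsRealWall C W)
    (hS : ∀ a ∈ S, ∀ b ∈ S, (fun i => (a i + b i) / 2) ∈ S) :
    IsDyadicWall (C ∩ S) (W ∩ (C ∩ S)) := by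
  refine ⟨Set.inter_subset_right, fun a ha b hb => ?_⟩
  have hmid := hW.coordMidpoint_mem_iff ha.1 hb.1
  constructor
  · rintro ⟨hmidW, -⟩
    exact ⟨⟨(hmid.mp hmidW).1, ha⟩, ⟨(hmid.mp hmidW).2, hb⟩⟩
  · rintro ⟨⟨haW, -⟩, ⟨hbW, -⟩⟩
    have hmidW := hmid.mpr ⟨haW, hbW⟩
    exact ⟨hmidW, hW.1 hmidW, hS a ha.2 b hb.2⟩

theorem real_wall_gives_dyadic_wall_general {n : ℕ}
    (C : Set (Fin n → ℝ))
    (P : Set (Fin n → ℝ)) (hP : P = C ∩ {x | ∀ i, IsDyadic (x i)})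
    (W : Set (Fin n → ℝ)) (hW : IsRealWall C W) :
    IsDyadicWall P (W ∩ P) := by
  subst hP
  exact hW.isDyadicWall_inter fun a ha b hb i => (ha i).add_div_two (hb i)

theorem real_wall_gives_dyadic_wall {n : ℕ} (V : Set (Fin n → ℝ))
    (hVfin : V.Finite) (hVd : ∀ v ∈ V, ∀ i, IsDyadic (v i))
    (C : Set (Fin n → ℝ)) (hC : C = convexHull ℝ V)
    (P : Set (Fin n → ℝ)) (hP : P = C ∩ {x | ∀ i, IsDyadic (x i)})
    (W : Set (Fin n → ℝ)) (hW : IsRealWall C W) :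
    IsDyadicWall P (W ∩ P) :=
  real_wall_gives_dyadic_wall_general C P hP W hW
end

section
/- Let X = {x₀, …, x_n} be affinely independent points in D^n (dyadic coordinates). Then the closure of X under the coordinatewise arithmetic mean operation equals the set of all points x₀r₀ + ⋯ + x_n r_n where each rᵢ is a dyadic rational in [0,1] and r₀ + ⋯ + r_n = 1. -/
inductive MeanClosureV {n : ℕ} (X : Set (Fin n → ℝ)) : (Fin n → ℝ) → Prop
  | base {x} : x ∈ X → MeanClosureV X x
  | mean {x y} : MeanClosureV X x → MeanClosureV X y →
      MeanClosureV X (fun i => (x i + y i) / 2)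

/-!
Averaging two dyadic weight vectors gives a dyadic weight vector, so the mean closure lies in the
dyadic simplex. Conversely, dyadic weights can be put over a common denominator, `r i = k i / 2 ^ M`
with `∑ k i = 2 ^ M`; the point is then the plain average of `2 ^ M` vertices (`x i` taken `k i`
times), and such an average is the mean of the averages of its two halves, which lie in the
closure by induction on `M`.
-/

theorem IsDyadic.intCast_s17 (k : ℤ) : IsDyadic k := ⟨k, 0, by simp⟩

theorem IsDyadic.add_div_two_s17 {a b : ℝ} (ha : IsDyadic a) (hb : IsDyadic b) :
    IsDyadic ((a + b) / 2) := by
  obtain ⟨k, p, rfl⟩ := ha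
  obtain ⟨l, q, rfl⟩ := hb
  refine ⟨k * 2 ^ q + l * 2 ^ p, p + q + 1, ?_⟩
  push_cast
  field_simp
  ring

theorem IsDyadic.exists_mul_two_pow_eq_intCast {x : ℝ} (h : IsDyadic x) :
    ∃ N : ℕ, ∀ M ≥ N, ∃ k : ℤ, x * 2 ^ M = k := by
  obtain ⟨k, N, rfl⟩ := h
  refine ⟨N, fun M hM => ⟨k * 2 ^ (M - N), ?_⟩⟩
  rw [← Nat.add_sub_cancel' hM, pow_add]
  push_cast
  field_simp
  simp

theorem exists_eq_natCast_div_two_pow {ι : Type*} [Finite ι] {r : ι → ℝ}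
    (hd : ∀ i, IsDyadic (r i)) (h0 : ∀ i, 0 ≤ r i) :
    ∃ M : ℕ, ∃ k : ι → ℕ, ∀ i, r i = k i / 2 ^ M := by
  have := Fintype.ofFinite ι
  choose N hN using fun i => (hd i).exists_mul_two_pow_eq_intCast
  have hk : ∀ i, ∃ k : ℕ, r i = k / 2 ^ (Finset.univ.sup N) := fun i => by
    obtain ⟨k, hk⟩ := hN i _ (Finset.le_sup (Finset.mem_univ i))
    lift k to ℕ using (by exact_mod_cast hk ▸ mul_nonneg (h0 i) (by positivity))
    push_cast at hk
    exact ⟨k, by rw [eq_div_iff (by positivity), hk]⟩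
  choose k hk using hk
  exact ⟨_, k, hk⟩

section

variable {n : ℕ} {X : Set (Fin n → ℝ)}

theorem MeanClosureV.midpoint {u v : Fin n → ℝ} (hu : MeanClosureV X u)
    (hv : MeanClosureV X v) : MeanClosureV X ((2 : ℝ)⁻¹ • (u + v)) := by
  convert hu.mean hv using 1
  ext i
  simp [div_eq_inv_mul]

theorem MeanClosureV.average_fin (m : ℕ) (p : Fin (2 ^ m) → Fin n → ℝ)
    (hp : ∀ j, p j ∈ X) : MeanClosureV X ((2 ^ m : ℝ)⁻¹ • ∑ j, p j) := by
  induction m with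
  | zero => simpa using base (hp 0)
  | succ m ih =>
    let e : Fin (2 ^ (m + 1)) ≃ Fin (2 ^ m) ⊕ Fin (2 ^ m) :=
      Fintype.equivOfCardEq (by simp [pow_succ, mul_two])
    have hsplit : ∑ j, p j = ∑ j, p (e.symm (.inl j)) + ∑ j, p (e.symm (.inr j)) := by
      rw [← e.symm.sum_comp, Fintype.sum_sum_type]
    have := (ih _ fun j => hp (e.symm (.inl j))).midpoint (ih _ fun j => hp (e.symm (.inr j)))
    rwa [hsplit, pow_succ, mul_inv, mul_comm, mul_smul, smul_add]

theorem MeanClosureV.average {α : Type*} [Fintype α] {m : ℕ} (hα : Fintype.card α = 2 ^ m)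
    (p : α → Fin n → ℝ) (hp : ∀ a, p a ∈ X) :
    MeanClosureV X ((2 ^ m : ℝ)⁻¹ • ∑ a, p a) := by
  let e := Fintype.equivFinOfCardEq hα
  rw [← e.symm.sum_comp]
  exact average_fin m _ fun j => hp _

end

section

variable {n : ℕ} {ι : Type*} [Fintype ι] (x : ι → Fin n → ℝ)

theorem MeanClosureV.exists_dyadic_weights {y : Fin n → ℝ}
    (hy : MeanClosureV (Set.range x) y) :
    ∃ r : ι → ℝ, (∀ i, IsDyadic (r i) ∧ 0 ≤ r i ∧ r i ≤ 1) ∧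
      ∑ i, r i = 1 ∧ y = ∑ i, r i • x i := by
  classical
  induction hy with
  | base hz =>
    obtain ⟨i, rfl⟩ := hz
    refine ⟨Pi.single i 1, fun j => ?_, by simp, by simp [Pi.single_apply, ite_smul]⟩
    rcases eq_or_ne j i with rfl | hj
    · simpa using IsDyadic.intCast_s17 1
    · simpa [hj] using IsDyadic.intCast_s17 0
  | mean _ _ ihu ihv =>
    obtain ⟨r, hr, hrsum, rfl⟩ := ihu
    obtain ⟨s, hs, hssum, rfl⟩ := ihv
    refine ⟨fun i => (r i + s i) / 2, fun i => ?_, ?_, ?_⟩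
    · obtain ⟨hrd, hr0, hr1⟩ := hr i
      obtain ⟨hsd, hs0, hs1⟩ := hs i
      exact ⟨hrd.add_div_two_s17 hsd, by linarith, by linarith⟩
    · rw [← Finset.sum_div, Finset.sum_add_distrib, hrsum, hssum]
      norm_num
    · ext j
      simp [Finset.sum_add_distrib, add_mul, Finset.sum_div, add_div, mul_div_right_comm]

theorem meanClosureV_of_nat_weights {m : ℕ} (k : ι → ℕ) (hk : ∑ i, k i = 2 ^ m) :
    MeanClosureV (Set.range x) (∑ i, ((k i : ℝ) / 2 ^ m) • x i) := by
  have hcard : Fintype.card (Σ i, Fin (k i)) = 2 ^ m := by simpa using hk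
  convert MeanClosureV.average hcard (fun a => x a.1) fun a => Set.mem_range_self a.1 using 1
  simp [Fintype.sum_sigma, Finset.smul_sum, ← Nat.cast_smul_eq_nsmul ℝ, smul_smul, div_eq_inv_mul]

theorem meanClosureV_of_dyadic_weights (r : ι → ℝ) (hd : ∀ i, IsDyadic (r i))
    (h0 : ∀ i, 0 ≤ r i) (hsum : ∑ i, r i = 1) :
    MeanClosureV (Set.range x) (∑ i, r i • x i) := by
  obtain ⟨M, k, hk⟩ := exists_eq_natCast_div_two_pow hd h0
  have hksum : ∑ i, k i = 2 ^ M := by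
    have : ∑ i, (k i : ℝ) / 2 ^ M = 1 := by simpa only [hk] using hsum
    rw [← Finset.sum_div, div_eq_one_iff_eq (by positivity)] at this
    exact_mod_cast this
  simpa only [hk] using meanClosureV_of_nat_weights x k hksum

end

theorem dyadic_simplex_description_general {n : ℕ} (x : Fin (n + 1) → (Fin n → ℝ)) :
    {y : Fin n → ℝ | MeanClosureV (Set.range x) y}
      = {y | ∃ r : Fin (n + 1) → ℝ,
          (∀ i, IsDyadic (r i) ∧ 0 ≤ r i ∧ r i ≤ 1) ∧
          (∑ i, r i) = 1 ∧ y = ∑ i, r i • x i} := by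
  ext y
  refine ⟨MeanClosureV.exists_dyadic_weights x, ?_⟩
  rintro ⟨r, hr, hsum, rfl⟩
  exact meanClosureV_of_dyadic_weights x r (fun i => (hr i).1) (fun i => (hr i).2.1) hsum

theorem dyadic_simplex_description {n : ℕ} (x : Fin (n + 1) → (Fin n → ℝ))
    (hxd : ∀ i, ∀ j, IsDyadic (x i j))
    (hind : AffineIndependent ℝ x) :
    {y : Fin n → ℝ | MeanClosureV (Set.range x) y}
      = {y | ∃ r : Fin (n + 1) → ℝ,
          (∀ i, IsDyadic (r i) ∧ 0 ≤ r i ∧ r i ≤ 1) ∧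
          (∑ i, r i) = 1 ∧ y = ∑ i, r i • x i} :=
  dyadic_simplex_description_general x
end
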